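/- arXiv:2005.06115 — 4 statements merged into one kernel-verified Lean document; each statement's English description precedes it below -/
import Mathlib

section
/- Let V be a finite type, r : V → V → Prop a relation (the edge relation of a finite directed graph), T : Set V a target set, X : Set V, and d : V → ℤ. Suppose that for every v ∈ X with v ∉ T there exists v' such that r v v' and either v' ∈ T, or v' ∈ X and d v > d v'. Then every v ∈ X can reach T, i.e. for every v ∈ X there exists t ∈ T with Relation.ReflTransGen r v t. -/
/-- Soundness of the distance-variable (ranking-function) constraint: if from
every non-target state of `X` there is an edge to a target state or to a state
of `X` with strictly smaller `d`-value, then every state of `X` can reach the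
target set `T`. -/
theorem ranking_constraint_sound
    {V : Type*} [Fintype V] (r : V → V → Prop) (T X : Set V) (d : V → ℤ)
    (h : ∀ v ∈ X, v ∉ T →
      ∃ v', r v v' ∧ (v' ∈ T ∨ (v' ∈ X ∧ d v > d v'))) :
    ∀ v ∈ X, ∃ t ∈ T, Relation.ReflTransGen r v t := by
  classical
  have key : ∀ n : ℕ, ∀ v ∈ X,
      (Finset.univ.filter (fun w => d w < d v)).card ≤ n →
      ∃ t ∈ T, Relation.ReflTransGen r v t := by
    intro n
    induction n with
    | zero =>
      intro v hv hc
      by_cases hvT : v ∈ T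
      · exact ⟨v, hvT, Relation.ReflTransGen.refl⟩
      obtain ⟨v', hr, hcase⟩ := h v hv hvT
      rcases hcase with hT | ⟨hv', hd⟩
      · exact ⟨v', hT, Relation.ReflTransGen.single hr⟩
      · exfalso
        have : v' ∈ Finset.univ.filter (fun w => d w < d v) := by
          simp [hd]
        have := Finset.card_pos.mpr ⟨v', this⟩
        omega
    | succ n ih =>
      intro v hv hc
      by_cases hvT : v ∈ T
      · exact ⟨v, hvT, Relation.ReflTransGen.refl⟩
      obtain ⟨v', hr, hcase⟩ := h v hv hvT
      rcases hcase with hT | ⟨hv', hd⟩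
      · exact ⟨v', hT, Relation.ReflTransGen.single hr⟩
      · have hsub : (Finset.univ.filter (fun w => d w < d v')) ⊂
            (Finset.univ.filter (fun w => d w < d v)) := by
          refine Finset.ssubset_iff_of_subset ?_ |>.mpr ⟨v', by simp [hd], by simp⟩
          intro w hw
          simp only [Finset.mem_filter, Finset.mem_univ, true_and] at hw ⊢
          omega
        have hcard := Finset.card_lt_card hsub
        obtain ⟨t, ht, hpath⟩ := ih v' hv' (by omega)
        exact ⟨t, ht, Relation.ReflTransGen.head hr hpath⟩
  intro v hv
  exact key _ v hv le_rfl
end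

section
/- Let V be a finite type, r : V → V → Prop a relation (the edge relation of a finite directed graph), and T : Set V a target set. Then there exists a function d : V → ℕ with d v ≤ Fintype.card V for all v, such that for every v ∉ T that can reach T (i.e. there exists t ∈ T with Relation.ReflTransGen r v t), there exists v' with r v v', such that v' can reach T, and d v > d v'. In particular, the domain of the distance variables only needs to contain at least Fintype.card V ordered values. -/
open Classical

/-- One step of backward reachability. -/
def rankStep {V : Type*} (r : V → V → Prop) (A : Set V) : Set V :=
  A ∪ {v | ∃ v', r v v' ∧ v' ∈ A}

/-- Iterated backward reachability sets from `T`. -/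
def rankS {V : Type*} (r : V → V → Prop) (T : Set V) : ℕ → Set V
  | 0 => T
  | n + 1 => rankStep r (rankS r T n)

lemma rankS_mono_succ {V : Type*} (r : V → V → Prop) (T : Set V) (n : ℕ) :
    rankS r T n ⊆ rankS r T (n + 1) := fun v hv => Or.inl hv

lemma rankS_mono {V : Type*} (r : V → V → Prop) (T : Set V) {m n : ℕ} (h : m ≤ n) :
    rankS r T m ⊆ rankS r T n := by
  induction h with
  | refl => exact subset_rfl
  | step _ ih => exact ih.trans (rankS_mono_succ r T _)

lemma rankS_stab {V : Type*} (r : V → V → Prop) (T : Set V) {k : ℕ}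
    (h : rankS r T (k + 1) = rankS r T k) : ∀ m, k ≤ m → rankS r T m = rankS r T k := by
  intro m hm
  induction hm with
  | refl => rfl
  | @step n _ ih =>
      show rankStep r (rankS r T n) = rankS r T k
      rw [ih]; exact h

lemma rankS_reach {V : Type*} (r : V → V → Prop) (T : Set V) {n : ℕ} :
    ∀ v ∈ rankS r T n, ∃ t ∈ T, Relation.ReflTransGen r v t := by
  induction n with
  | zero => exact fun v hv => ⟨v, hv, Relation.ReflTransGen.refl⟩
  | succ n ih =>
      intro v hv
      rcases hv with hv | ⟨v', hr, hv'⟩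
      · exact ih v hv
      · obtain ⟨t, ht, hrt⟩ := ih v' hv'
        exact ⟨t, ht, Relation.ReflTransGen.head hr hrt⟩

lemma reach_rankS {V : Type*} (r : V → V → Prop) (T : Set V) {v : V}
    (h : ∃ t ∈ T, Relation.ReflTransGen r v t) : ∃ n, v ∈ rankS r T n := by
  obtain ⟨t, ht, hrt⟩ := h
  induction hrt using Relation.ReflTransGen.head_induction_on with
  | refl => exact ⟨0, ht⟩
  | head hr _ ih =>
      obtain ⟨n, hn⟩ := ih
      exact ⟨n + 1, Or.inr ⟨_, hr, hn⟩⟩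

lemma chain_card {V : Type*} [Fintype V] [DecidableEq V] (f : ℕ → Finset V) (n : ℕ)
    (h : ∀ k < n, f k ⊂ f (k + 1)) : n ≤ (f n).card := by
  induction n with
  | zero => exact Nat.zero_le _
  | succ n ih =>
      have h1 : (f n).card < (f (n + 1)).card :=
        Finset.card_lt_card (h n (Nat.lt_succ_self n))
      have h2 : n ≤ (f n).card := ih fun k hk => h k (hk.trans (Nat.lt_succ_self n))
      omega

/-- Completeness of the distance-variable (ranking-function) constraint: there
is always an assignment `d : V → ℕ` of distance values, bounded by the number
of vertices, such that every non-target state that can reach the target set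
has a successor that can reach the target set and has strictly smaller
`d`-value. -/
theorem ranking_constraint_complete
    {V : Type*} [Fintype V] (r : V → V → Prop) (T : Set V) :
    ∃ d : V → ℕ, (∀ v, d v ≤ Fintype.card V) ∧
      ∀ v, v ∉ T → (∃ t ∈ T, Relation.ReflTransGen r v t) →
        ∃ v', r v v' ∧ (∃ t ∈ T, Relation.ReflTransGen r v' t) ∧ d v > d v' := by
  classical
  set d : V → ℕ := fun v => if h : ∃ n, v ∈ rankS r T n then Nat.find h else 0 with hd
  refine ⟨d, ?_, ?_⟩
  · intro v
    by_cases h : ∃ n, v ∈ rankS r T n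
    · simp only [hd, dif_pos h]
      set n := Nat.find h with hn
      -- for each k < n, rankS k ⊊ rankS (k+1)
      have hssub : ∀ k < n, (rankS r T k).toFinset ⊂ (rankS r T (k + 1)).toFinset := by
        intro k hk
        rw [Set.toFinset_ssubset_toFinset]
        refine ⟨rankS_mono_succ r T k, fun heq => ?_⟩
        have heq' : rankS r T (k + 1) = rankS r T k :=
          le_antisymm heq (rankS_mono_succ r T k)
        have hvk : v ∈ rankS r T k := by
          have := rankS_stab r T heq' n (le_of_lt hk)
          rw [← this]; exact Nat.find_spec h
        exact absurd hvk (Nat.find_min h hk)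
      have := chain_card (fun k => (rankS r T k).toFinset) n hssub
      calc n ≤ ((rankS r T n).toFinset).card := this
        _ ≤ Fintype.card V := Finset.card_le_univ _
    · simp only [hd, dif_neg h]; exact Nat.zero_le _
  · intro v hvT hreach
    have h : ∃ n, v ∈ rankS r T n := reach_rankS r T hreach
    have hdv : d v = Nat.find h := by simp only [hd, dif_pos h]
    set n := Nat.find h with hn
    have hvn : v ∈ rankS r T n := Nat.find_spec h
    have hn0 : n ≠ 0 := by
      intro h0
      rw [h0] at hvn
      exact hvT hvn
    obtain ⟨m, hm⟩ := Nat.exists_eq_succ_of_ne_zero hn0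
    rw [hm] at hvn
    have hvm : v ∉ rankS r T m := Nat.find_min h (by omega)
    rcases hvn with hvn | ⟨v', hr, hv'⟩
    · exact absurd hvn hvm
    · have h' : ∃ k, v' ∈ rankS r T k := ⟨m, hv'⟩
      have hdv' : d v' = Nat.find h' := by simp only [hd, dif_pos h']
      have hle : Nat.find h' ≤ m := Nat.find_min' h' hv'
      exact ⟨v', hr, rankS_reach r T v' hv', by omega⟩
end

section
/- Let V be a finite type, and let T, U, Z : Set V be pairwise disjoint sets with T ∪ U ∪ Z = V. Let p : V → V → ℝ satisfy p v v' ≥ 0 for all v, v', and ∑_{v'} p v v' = 1 for every v ∈ U. Call x : V → ℝ an admissible solution if: (i) 0 ≤ x v ≤ 1 for all v; (ii) x v = 1 for all v ∈ T; (iii) x v = 0 for all v ∈ Z; (iv) x v = ∑_{v'} p v v' · x v' for all v ∈ U; and (v) for every v ∈ U with x v > 0 there exists t ∈ T with Relation.ReflTransGen E v t, where E a b is defined as (a ∈ U ∧ p a b > 0). Then any two admissible solutions x and y are equal: x = y. -/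
/-- Auxiliary: one direction of the uniqueness. -/
lemma unbounded_until_le_aux
    {V : Type*} [Fintype V] (T U Z : Set V)
    (hcover : T ∪ U ∪ Z = Set.univ)
    (p : V → V → ℝ)
    (hp : ∀ v v', p v v' ≥ 0) (hsum : ∀ v ∈ U, ∑ v', p v v' = 1)
    (x y : V → ℝ)
    (hx2 : ∀ v ∈ T, x v = 1)
    (hx3 : ∀ v ∈ Z, x v = 0)
    (hx4 : ∀ v ∈ U, x v = ∑ v', p v v' * x v')
    (hx5 : ∀ v ∈ U, x v > 0 →
      ∃ t ∈ T, Relation.ReflTransGen (fun a b => a ∈ U ∧ p a b > 0) v t)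
    (hy1 : ∀ v, 0 ≤ y v ∧ y v ≤ 1)
    (hy2 : ∀ v ∈ T, y v = 1)
    (hy3 : ∀ v ∈ Z, y v = 0)
    (hy4 : ∀ v ∈ U, y v = ∑ v', p v v' * y v') :
    ∀ v, x v ≤ y v := by
  by_contra hcon
  push_neg at hcon
  obtain ⟨w, hw⟩ := hcon
  set d : V → ℝ := fun v => x v - y v with hd
  obtain ⟨v0, -, hmax⟩ := Finset.exists_max_image (Finset.univ : Finset V) d ⟨w, Finset.mem_univ w⟩
  have hM : 0 < d v0 := lt_of_lt_of_le (by simpa [hd] using sub_pos.mpr hw) (hmax w (Finset.mem_univ w))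
  -- d satisfies the Bellman equation on U
  have hdeq : ∀ a ∈ U, d a = ∑ v', p a v' * d v' := by
    intro a ha
    simp only [hd, mul_sub, Finset.sum_sub_distrib]
    rw [← hx4 a ha, ← hy4 a ha]
  -- closure of the max set under positive-probability edges inside U
  have hclos : ∀ a ∈ U, d a = d v0 → ∀ b, p a b > 0 → d b = d v0 := by
    intro a ha hda b hpb
    have hzero : ∑ v', p a v' * (d v0 - d v') = 0 := by
      simp only [mul_sub, Finset.sum_sub_distrib, ← Finset.sum_mul, hsum a ha, one_mul,
        ← hdeq a ha, hda, sub_self]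
    have hnn : ∀ v' ∈ (Finset.univ : Finset V), 0 ≤ p a v' * (d v0 - d v') := by
      intro v' _
      exact mul_nonneg (hp a v') (sub_nonneg.mpr (hmax v' (Finset.mem_univ v')))
    have := (Finset.sum_eq_zero_iff_of_nonneg hnn).mp hzero b (Finset.mem_univ b)
    rcases mul_eq_zero.mp this with h | h
    · exact absurd h (ne_of_gt hpb)
    · linarith [sub_eq_zero.mp h]
  -- v0 is in U
  have hv0U : v0 ∈ U := by
    have : v0 ∈ T ∪ U ∪ Z := hcover ▸ Set.mem_univ v0
    rcases this with (hT | hU) | hZ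
    · exfalso; have : d v0 ≤ 0 := by
        have h1 := hx2 v0 hT; have h2 := hy2 v0 hT; simp [hd, h1, h2]
      linarith
    · exact hU
    · exfalso
      have h1 := hx3 v0 hZ
      have h2 := (hy1 v0).1
      have : d v0 ≤ 0 := by simp [hd, h1]; linarith
      linarith
  have hxpos : x v0 > 0 := by
    have := (hy1 v0).1
    have : d v0 ≤ x v0 := by simp [hd]; linarith
    linarith
  obtain ⟨t, htT, hpath⟩ := hx5 v0 hv0U hxpos
  -- along the path the max value propagates
  have hdt : d t = d v0 := by
    have key : ∀ a, Relation.ReflTransGen (fun a b => a ∈ U ∧ p a b > 0) a t →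
        d a = d v0 → d t = d v0 := by
      intro a hrel
      induction hrel using Relation.ReflTransGen.head_induction_on with
      | refl => exact fun h => h
      | head h' _ ih =>
        intro hda
        obtain ⟨haU, hpab⟩ := h'
        exact ih (hclos _ haU hda _ hpab)
    exact key v0 hpath rfl
  have : d t = 0 := by simp [hd, hx2 t htT, hy2 t htT]
  linarith

/-- Uniqueness of admissible solutions of the Bellman equations for unbounded
until, under the side condition that every state with positive value can reach
the target set through positive-probability edges inside `U`. -/
theorem unbounded_until_unique_solution
    {V : Type*} [Fintype V] (T U Z : Set V)
    (hTU : Disjoint T U) (hTZ : Disjoint T Z) (hUZ : Disjoint U Z)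
    (hcover : T ∪ U ∪ Z = Set.univ)
    (p : V → V → ℝ)
    (hp : ∀ v v', p v v' ≥ 0) (hsum : ∀ v ∈ U, ∑ v', p v v' = 1)
    (x y : V → ℝ)
    (hx1 : ∀ v, 0 ≤ x v ∧ x v ≤ 1)
    (hx2 : ∀ v ∈ T, x v = 1)
    (hx3 : ∀ v ∈ Z, x v = 0)
    (hx4 : ∀ v ∈ U, x v = ∑ v', p v v' * x v')
    (hx5 : ∀ v ∈ U, x v > 0 →
      ∃ t ∈ T, Relation.ReflTransGen (fun a b => a ∈ U ∧ p a b > 0) v t)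
    (hy1 : ∀ v, 0 ≤ y v ∧ y v ≤ 1)
    (hy2 : ∀ v ∈ T, y v = 1)
    (hy3 : ∀ v ∈ Z, y v = 0)
    (hy4 : ∀ v ∈ U, y v = ∑ v', p v v' * y v')
    (hy5 : ∀ v ∈ U, y v > 0 →
      ∃ t ∈ T, Relation.ReflTransGen (fun a b => a ∈ U ∧ p a b > 0) v t) :
    x = y := by
  funext v
  exact le_antisymm
    (unbounded_until_le_aux T U Z hcover p hp hsum x y hx2 hx3 hx4 hx5 hy1 hy2 hy3 hy4 v)
    (unbounded_until_le_aux T U Z hcover p hp hsum y x hy2 hy3 hy4 hy5 hx1 hx2 hx3 hx4 v)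
end

section
/- Let V be a finite type, and let T, U, Z : Set V be pairwise disjoint sets with T ∪ U ∪ Z = V. Let p : V → V → ℝ satisfy p v v' ≥ 0 for all v, v', and ∑_{v'} p v v' = 1 for every v ∈ U. Suppose x : V → ℝ satisfies: (i) 0 ≤ x v ≤ 1 for all v; (ii) x v = 1 for all v ∈ T; (iii) x v = 0 for all v ∈ Z; (iv) x v = ∑_{v'} p v v' · x v' for all v ∈ U; and (v) for every v ∈ U with x v > 0 there exists t ∈ T with Relation.ReflTransGen E v t, where E a b is defined as (a ∈ U ∧ p a b > 0). Suppose y : V → ℝ satisfies only (i)–(iv). Then x v ≤ y v for all v ∈ V. -/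
/-- Least-fixed-point property: the admissible solution of the Bellman
equations for unbounded until (satisfying the reachability side condition) is
below every other fixed point of the equation system. -/
theorem unbounded_until_least_fixed_point
    {V : Type*} [Fintype V] (T U Z : Set V)
    (hTU : Disjoint T U) (hTZ : Disjoint T Z) (hUZ : Disjoint U Z)
    (hcover : T ∪ U ∪ Z = Set.univ)
    (p : V → V → ℝ)
    (hp : ∀ v v', p v v' ≥ 0) (hsum : ∀ v ∈ U, ∑ v', p v v' = 1)
    (x y : V → ℝ)
    (hx1 : ∀ v, 0 ≤ x v ∧ x v ≤ 1)
    (hx2 : ∀ v ∈ T, x v = 1)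
    (hx3 : ∀ v ∈ Z, x v = 0)
    (hx4 : ∀ v ∈ U, x v = ∑ v', p v v' * x v')
    (hx5 : ∀ v ∈ U, x v > 0 →
      ∃ t ∈ T, Relation.ReflTransGen (fun a b => a ∈ U ∧ p a b > 0) v t)
    (hy1 : ∀ v, 0 ≤ y v ∧ y v ≤ 1)
    (hy2 : ∀ v ∈ T, y v = 1)
    (hy3 : ∀ v ∈ Z, y v = 0)
    (hy4 : ∀ v ∈ U, y v = ∑ v', p v v' * y v') :
    ∀ v, x v ≤ y v := by
  by_contra hcon
  push_neg at hcon
  obtain ⟨v₀, hv₀⟩ := hcon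
  have hne : (Finset.univ : Finset V).Nonempty := ⟨v₀, Finset.mem_univ _⟩
  obtain ⟨m, -, hm⟩ := Finset.exists_max_image Finset.univ (fun v => x v - y v) hne
  set δ := x m - y m with hδ
  have hdle : ∀ v, x v - y v ≤ δ := fun v => hm v (Finset.mem_univ _)
  have hδpos : 0 < δ := lt_of_lt_of_le (by linarith) (hdle v₀)
  have hdT : ∀ v ∈ T, x v - y v = 0 := fun v hv => by rw [hx2 v hv, hy2 v hv]; ring
  have hdZ : ∀ v ∈ Z, x v - y v = 0 := fun v hv => by rw [hx3 v hv, hy3 v hv]; ring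
  have key : ∀ v, v ∈ U → x v - y v = δ → ∀ w, p v w > 0 → x w - y w = δ := by
    intro v hvU hvM w hpw
    by_contra hne'
    have hlt : x w - y w < δ := lt_of_le_of_ne (hdle w) hne'
    have hsumlt : ∑ v', p v v' * (x v' - y v') < ∑ v', p v v' * δ := by
      apply Finset.sum_lt_sum
      · intro i _
        exact mul_le_mul_of_nonneg_left (hdle i) (hp v i)
      · exact ⟨w, Finset.mem_univ _, mul_lt_mul_of_pos_left hlt hpw⟩
    have h1 : x v - y v = ∑ v', p v v' * (x v' - y v') := by
      rw [hx4 v hvU, hy4 v hvU, ← Finset.sum_sub_distrib]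
      exact Finset.sum_congr rfl (fun i _ => by ring)
    have h2 : ∑ v', p v v' * δ = δ := by
      rw [← Finset.sum_mul, hsum v hvU, one_mul]
    linarith [hvM, h1, h2, hsumlt]
  have prop : ∀ a b, Relation.ReflTransGen (fun a b => a ∈ U ∧ p a b > 0) a b →
      x a - y a = δ → x b - y b = δ := by
    intro a b hab
    induction hab using Relation.ReflTransGen.head_induction_on with
    | refl => exact id
    | head h _ ih => exact fun ha => ih (key _ h.1 ha _ h.2)
  have hmU : m ∈ U := by
    have : m ∈ T ∪ U ∪ Z := hcover ▸ Set.mem_univ m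
    rcases this with (hT | hU) | hZ
    · exact absurd (hdT m hT) (by linarith)
    · exact hU
    · exact absurd (hdZ m hZ) (by linarith)
  have hxm : x m > 0 := by
    have := (hy1 m).1
    linarith
  obtain ⟨t, htT, hpath⟩ := hx5 m hmU hxm
  have := prop m t hpath rfl
  have := hdT t htT
  linarith
end
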